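/- For every point z in the hyperbolic upper half-plane ℍ and every R > 0, sinh(Metric.infDist z ℓ_R) = | |z|² − R² | / (2·R·Im z), where ℓ_R = {u ∈ ℍ : |u| = R}. -/

import Mathlib

/-!
Write `sinh d(z, u) = |z - u| |z - ū| / (2 Im z Im u)`. For `|u| = R` the Lagrange-type identity
`R² |z - u|² |z - ū|² = (|z|² - R²)² (Im u)² + ((|z|² + R²) Re u - 2 R² Re z)²`
bounds `sinh d(z, u)` below by `| |z|² - R² | / (2 R Im z)`, with equality at the point of `ℓ_R`
whose real part is `2 R² Re z / (|z|² + R²)` (the foot of the perpendicular from `z`).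
-/

open UpperHalfPlane

/-- The geodesic `ℓ_R = {u ∈ ℍ : |u| = R}` in the upper half-plane. -/
noncomputable def ell (R : ℝ) : Set ℍ := {u : ℍ | ‖(u : ℂ)‖ = R}

/-- The point `t·i` of the upper half-plane, for `t > 0`. -/
noncomputable def vpt (t : ℝ) (ht : 0 < t) : ℍ :=
  UpperHalfPlane.mk (t * Complex.I) (by simpa using ht)

open ComplexConjugate

namespace Complex

theorem sq_norm_mul_sq_norm_sub_mul_norm_sub_conj (z u : ℂ) :
    ‖u‖ ^ 2 * (‖z - u‖ * ‖z - conj u‖) ^ 2 =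
      (‖z‖ ^ 2 - ‖u‖ ^ 2) ^ 2 * u.im ^ 2 + ((‖z‖ ^ 2 + ‖u‖ ^ 2) * u.re - 2 * ‖u‖ ^ 2 * z.re) ^ 2 := by
  simp only [mul_pow, Complex.sq_norm, normSq_apply, sub_re, sub_im, conj_re, conj_im]
  ring

theorem abs_sq_norm_sub_mul_abs_im_le (z u : ℂ) :
    |‖z‖ ^ 2 - ‖u‖ ^ 2| * |u.im| ≤ ‖u‖ * (‖z - u‖ * ‖z - conj u‖) := by
  refine abs_le_of_sq_le_sq' ?_ (by positivity) |>.2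
  rw [mul_pow, mul_pow, sq_abs, sq_abs, sq_norm_mul_sq_norm_sub_mul_norm_sub_conj]
  exact le_add_of_nonneg_right (sq_nonneg _)

theorem abs_sq_norm_sub_mul_abs_im_eq (z u : ℂ)
    (h : (‖z‖ ^ 2 + ‖u‖ ^ 2) * u.re = 2 * ‖u‖ ^ 2 * z.re) :
    |‖z‖ ^ 2 - ‖u‖ ^ 2| * |u.im| = ‖u‖ * (‖z - u‖ * ‖z - conj u‖) := by
  refine (pow_left_inj₀ (by positivity) (by positivity) two_ne_zero).1 ?_
  rw [mul_pow, mul_pow, sq_abs, sq_abs, sq_norm_mul_sq_norm_sub_mul_norm_sub_conj, h, sub_self]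
  ring

theorem abs_two_mul_sq_mul_re_lt {z : ℂ} (hz : z.im ≠ 0) {R : ℝ} (hR : 0 < R) :
    |2 * R ^ 2 * z.re| < R * (‖z‖ ^ 2 + R ^ 2) :=
  calc |2 * R ^ 2 * z.re| = 2 * R ^ 2 * |z.re| := by rw [abs_mul, abs_of_pos (by positivity)]
    _ < 2 * R ^ 2 * ‖z‖ := by gcongr; exact abs_re_lt_norm.2 hz
    _ ≤ R * (‖z‖ ^ 2 + R ^ 2) := by nlinarith [sq_nonneg (‖z‖ - R)]

end Complex

namespace UpperHalfPlane

theorem sinh_dist (z w : ℍ) :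
    Real.sinh (dist z w) = dist (z : ℂ) w * dist (z : ℂ) (conj (w : ℂ)) / (2 * z.im * w.im) := by
  rw [← mul_div_cancel₀ (dist z w) two_ne_zero, Real.sinh_two_mul, sinh_half_dist, cosh_half_dist]
  have hz := z.im_pos
  have hw := w.im_pos
  field_simp
  rw [Real.sq_sqrt (by positivity)]
  ring

end UpperHalfPlane

theorem exists_mem_ell_re_eq {R a : ℝ} (ha : |a| < R) : ∃ u ∈ ell R, (u : ℂ).re = a := by
  have him : 0 < R ^ 2 - a ^ 2 := by
    rw [sub_pos, ← sq_abs]; exact pow_lt_pow_left₀ ha (abs_nonneg a) two_ne_zero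
  refine ⟨UpperHalfPlane.mk ⟨a, √(R ^ 2 - a ^ 2)⟩ (Real.sqrt_pos.2 him), ?_, rfl⟩
  change ‖(⟨a, √(R ^ 2 - a ^ 2)⟩ : ℂ)‖ = R
  rw [Complex.norm_def, Complex.normSq_mk, ← sq, ← sq, Real.sq_sqrt him.le, add_sub_cancel,
    Real.sqrt_sq ((abs_nonneg a).trans ha.le)]

theorem sinh_dist_ge_of_mem_ell (z : ℍ) {u : ℍ} {R : ℝ} (hu : u ∈ ell R) :
    |‖(z : ℂ)‖ ^ 2 - R ^ 2| / (2 * R * z.im) ≤ Real.sinh (dist z u) := by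
  obtain rfl : ‖(u : ℂ)‖ = R := hu
  have hbound := Complex.abs_sq_norm_sub_mul_abs_im_le z u
  rw [coe_im, abs_of_pos u.im_pos] at hbound
  have hu0 : 0 < ‖(u : ℂ)‖ := norm_pos_iff.2 u.ne_zero
  rw [sinh_dist, Complex.dist_eq, Complex.dist_eq, div_le_div_iff₀ (by positivity) (by positivity)]
  calc |‖(z : ℂ)‖ ^ 2 - ‖(u : ℂ)‖ ^ 2| * (2 * z.im * u.im)
      = 2 * z.im * (|‖(z : ℂ)‖ ^ 2 - ‖(u : ℂ)‖ ^ 2| * u.im) := by ring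
    _ ≤ 2 * z.im * (‖(u : ℂ)‖ * (‖(z : ℂ) - u‖ * ‖(z : ℂ) - conj (u : ℂ)‖)) := by gcongr
    _ = _ := by ring

theorem exists_mem_ell_sinh_dist_eq (z : ℍ) {R : ℝ} (hR : 0 < R) :
    ∃ u ∈ ell R, Real.sinh (dist z u) = |‖(z : ℂ)‖ ^ 2 - R ^ 2| / (2 * R * z.im) := by
  have hK : 0 < ‖(z : ℂ)‖ ^ 2 + R ^ 2 := by positivity
  have hfoot : |2 * R ^ 2 * z.re / (‖(z : ℂ)‖ ^ 2 + R ^ 2)| < R := by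
    rw [abs_div, abs_of_pos hK, div_lt_iff₀ hK]
    exact Complex.abs_two_mul_sq_mul_re_lt z.im_ne_zero hR
  obtain ⟨u, hu, hre⟩ := exists_mem_ell_re_eq hfoot
  refine ⟨u, hu, ?_⟩
  obtain rfl : ‖(u : ℂ)‖ = R := hu
  have heq := Complex.abs_sq_norm_sub_mul_abs_im_eq z u (by rw [hre]; field_simp; rfl)
  rw [coe_im, abs_of_pos u.im_pos] at heq
  rw [sinh_dist, Complex.dist_eq, Complex.dist_eq, div_eq_div_iff (by positivity) (by positivity)]
  linear_combination (-2 * z.im) * heq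

/-- `sinh(d(z, ℓ_R)) = | |z|² − R² | / (2 R Im z)`. -/
theorem stmt3 (z : ℍ) (R : ℝ) (hR : 0 < R) :
    Real.sinh (Metric.infDist z (ell R)) =
      |‖(z : ℂ)‖ ^ 2 - R ^ 2| / (2 * R * z.im) := by
  obtain ⟨u₀, hu₀, hsinh⟩ := exists_mem_ell_sinh_dist_eq z hR
  have hfoot : Metric.infDist z (ell R) = dist z u₀ :=
    le_antisymm (Metric.infDist_le_dist_of_mem hu₀) <| (Metric.le_infDist ⟨u₀, hu₀⟩).2
      fun _ hu ↦ Real.sinh_le_sinh.1 <| hsinh.trans_le (sinh_dist_ge_of_mem_ell z hu)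
  rw [hfoot, hsinh]
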